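/- (Composition of two fairness programs satisfies both fairness specifications.) Let l and l' be distinct links with source(l) = i and source(l') = i', let a and a' be distinct local actions, let φ be a predicate on S_i and φ' a predicate on S_{i'}, and let t : S_i → Val and t' : S_{i'} → Val with t(s) ≠ ⊥ and t'(s') ≠ ⊥ for all s, s'. In any event structure satisfying the event-structure axioms, if the four clauses (ψ₁)–(ψ₄) of Fair-Pg(φ,t,l,a) hold (with agent i, link l, action a), the four clauses (ψ₁)–(ψ₄) of Fair-Pg(φ',t',l',a') hold (with agent i', link l', action a'), and both FairSend(l) and FairSend(l') hold, then both specifications Fair(φ,t,l) and Fair(φ',t',l') hold. -/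

import Mathlib

/-- An event structure over agents `AG`, links `Links`, local actions `Act`,
values `Val` (with a distinguished null value `bot`), and local variables `X`
(where `mv l` is the variable `msg(l)` recording the message sent on link `l`).
Local states are assignments of values to variables, i.e. functions `X → Val`.
An event of kind `Sum.inl l` is a receive on link `l`; an event of kind
`Sum.inr a` is a local `a`-event.  The fields `lt i` are the local strict total
orders `≺ᵢ` on the events of agent `i`, and `send` assigns to each receive
event its corresponding send event.  The event-structure axioms are the
`lt_*` order axioms and the `rcv_*` axioms about receive events. -/
structure EventStructure (AG Links Act Val X : Type) (source dest : Links → AG)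
    (bot : Val) (mv : Links → X) where
  E : Type
  agent : E → AG
  kind : E → Links ⊕ Act
  val : E → Val
  stateBefore : E → X → Val
  stateAfter : E → X → Val
  initstate : AG → X → Val
  lt : AG → E → E → Prop
  send : E → E
  lt_irrefl : ∀ i e, ¬ lt i e e
  lt_trans : ∀ i e₁ e₂ e₃, lt i e₁ e₂ → lt i e₂ e₃ → lt i e₁ e₃
  lt_total : ∀ i e e', agent e = i → agent e' = i → lt i e e' ∨ e = e' ∨ lt i e' e
  rcv_agent : ∀ e l, kind e = Sum.inl l → agent e = dest l
  rcv_send_agent : ∀ e l, kind e = Sum.inl l → agent (send e) = source l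
  rcv_val : ∀ e l, kind e = Sum.inl l → val e = stateAfter (send e) (mv l)
  rcv_val_ne : ∀ e l, kind e = Sum.inl l → val e ≠ bot

namespace EventStructure

variable {AG Links Act Val X : Type} {source dest : Links → AG} {bot : Val}
  {mv : Links → X}

/-- `e ⪯ᵢ e'`: the reflexive closure of the local order `≺ᵢ`. -/
def locLe (es : EventStructure AG Links Act Val X source dest bot mv) (i : AG)
    (e e' : es.E) : Prop :=
  es.lt i e e' ∨ e = e'

/-- Clause (ψ₁) of `Fair-Pg(φ,t,l,a)`: only `a`-events of agent `i` set `msg(l)`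
to a non-null value. -/
def psi1 (es : EventStructure AG Links Act Val X source dest bot mv)
    (i : AG) (l : Links) (a : Act) : Prop :=
  ∀ e, es.agent e = i → es.stateAfter e (mv l) ≠ bot → es.kind e = Sum.inr a

/-- Clause (ψ₂): agent `i` performs action `a` only if the precondition `phi`
holds of its local state. -/
def psi2 (es : EventStructure AG Links Act Val X source dest bot mv)
    (i : AG) (a : Act) (phi : (X → Val) → Prop) : Prop :=
  ∀ e, es.agent e = i → es.kind e = Sum.inr a → phi (es.stateBefore e)

/-- Clause (ψ₃): the effect of an `a`-event of agent `i` is to set `msg(l)` to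
the term `t` evaluated at the state before the event. -/
def psi3 (es : EventStructure AG Links Act Val X source dest bot mv)
    (i : AG) (l : Links) (a : Act) (t : (X → Val) → Val) : Prop :=
  ∀ e, es.agent e = i → es.kind e = Sum.inr a →
    es.stateAfter e (mv l) = t (es.stateBefore e)

/-- Clause (ψ₄), the weak-fairness clause. -/
def psi4 (es : EventStructure AG Links Act Val X source dest bot mv)
    (i : AG) (a : Act) (phi : (X → Val) → Prop) : Prop :=
  ((∃ e, es.agent e = i) ∧
    ∀ e, es.agent e = i → ∃ e', es.agent e' = i ∧ es.locLe i e e' ∧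
      (¬ phi (es.stateAfter e') ∨ es.kind e' = Sum.inr a)) ∨
  ((¬ ∃ e, es.agent e = i) ∧ ¬ phi (es.initstate i))

/-- The strong communication-fairness condition `FairSend(l)`, where
`i = source l`. -/
def FairSend (es : EventStructure AG Links Act Val X source dest bot mv)
    (i : AG) (l : Links) : Prop :=
  (∀ e, es.agent e = i → ∃ e', es.agent e' = i ∧ es.locLe i e e' ∧
      es.stateAfter e' (mv l) ≠ bot) →
  ∀ e, es.agent e = i → ∃ e', es.kind e' = Sum.inl l ∧ es.locLe i e (es.send e')

/-- Clause (φ₁) of the specification `Fair(φ,t,l)`: the precondition held at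
the sender's state when any message received on `l` was sent. -/
def phi1spec (es : EventStructure AG Links Act Val X source dest bot mv)
    (l : Links) (phi : (X → Val) → Prop) : Prop :=
  ∀ e', es.kind e' = Sum.inl l → phi (es.stateBefore (es.send e'))

/-- Clause (φ₂): every message received on `l` is `t` evaluated at the sender's
state at the time of sending. -/
def phi2spec (es : EventStructure AG Links Act Val X source dest bot mv)
    (l : Links) (t : (X → Val) → Val) : Prop :=
  ∀ e', es.kind e' = Sum.inl l → es.val e' = t (es.stateBefore (es.send e'))

/-- Clause (φ₃), the liveness clause of `Fair(φ,t,l)`, where `i = source l`. -/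
def phi3spec (es : EventStructure AG Links Act Val X source dest bot mv)
    (i : AG) (l : Links) (phi : (X → Val) → Prop) : Prop :=
  ((∃ e, es.agent e = i) ∧
    ∀ e, es.agent e = i → ∃ e', es.agent e' = i ∧ es.locLe i e e' ∧
      ¬ phi (es.stateAfter e')) ∨
  ((¬ ∃ e, es.agent e = i) ∧ ¬ phi (es.initstate i)) ∨
  ((∃ e, es.agent e = i) ∧
    ∀ e, es.agent e = i → ∃ e', es.kind e' = Sum.inl l ∧ es.locLe i e (es.send e'))

/-- The specification `Fair(φ,t,l)`: conjunction of (φ₁), (φ₂), (φ₃). -/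
def FairSpec (es : EventStructure AG Links Act Val X source dest bot mv)
    (i : AG) (l : Links) (phi : (X → Val) → Prop) (t : (X → Val) → Val) : Prop :=
  es.phi1spec l phi ∧ es.phi2spec l t ∧ es.phi3spec i l phi

end EventStructure

/-!
The two programs do not interact, so it suffices to show that one program `Fair-Pg(φ,t,l,a)`
under `FairSend(l)` satisfies `Fair(φ,t,l)`. By (ψ₁) the send event of any receive on `l` is an
`a`-event of `i`, since it leaves a non-null value in `msg(l)`; (ψ₂) and (ψ₃) at that event give
(φ₁) and (φ₂). For (φ₃), either `φ` fails again after every event of `i`, or it holds from some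
event `e₀` on. In the latter case (ψ₄) produces an `a`-event after every event, and each `a`-event
sets `msg(l)` to a value of `t`, which is non-null, so `FairSend(l)` yields the sends.
-/

namespace EventStructure

variable {AG Links Act Val X : Type} {source dest : Links → AG} {bot : Val} {mv : Links → X}
  (es : EventStructure AG Links Act Val X source dest bot mv)

theorem locLe_trans {i : AG} {e₁ e₂ e₃ : es.E} (h₁₂ : es.locLe i e₁ e₂)
    (h₂₃ : es.locLe i e₂ e₃) : es.locLe i e₁ e₃ := by
  rcases h₁₂ with h₁₂ | rfl
  · rcases h₂₃ with h₂₃ | rfl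
    · exact Or.inl (es.lt_trans i _ _ _ h₁₂ h₂₃)
    · exact Or.inl h₁₂
  · exact h₂₃

theorem exists_locLe_of_agent_eq {i : AG} {e₁ e₂ : es.E} (h₁ : es.agent e₁ = i)
    (h₂ : es.agent e₂ = i) : ∃ m, es.agent m = i ∧ es.locLe i e₁ m ∧ es.locLe i e₂ m := by
  rcases es.lt_total i e₁ e₂ h₁ h₂ with h | rfl | h
  · exact ⟨e₂, h₂, Or.inl h, Or.inr rfl⟩
  · exact ⟨e₁, h₁, Or.inr rfl, Or.inr rfl⟩
  · exact ⟨e₁, h₁, Or.inr rfl, Or.inl h⟩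

theorem stateAfter_send_ne_bot {e : es.E} {l : Links} (he : es.kind e = Sum.inl l) :
    es.stateAfter (es.send e) (mv l) ≠ bot :=
  es.rcv_val e l he ▸ es.rcv_val_ne e l he

theorem kind_send_of_psi1 {i : AG} {l : Links} {a : Act} (hsrc : source l = i)
    (h1 : es.psi1 i l a) {e : es.E} (he : es.kind e = Sum.inl l) :
    es.kind (es.send e) = Sum.inr a :=
  h1 _ (hsrc ▸ es.rcv_send_agent e l he) (es.stateAfter_send_ne_bot he)

theorem phi1spec_of_psi {i : AG} {l : Links} {a : Act} {phi : (X → Val) → Prop}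
    (hsrc : source l = i) (h1 : es.psi1 i l a) (h2 : es.psi2 i a phi) :
    es.phi1spec l phi := fun e he =>
  h2 _ (hsrc ▸ es.rcv_send_agent e l he) (es.kind_send_of_psi1 hsrc h1 he)

theorem phi2spec_of_psi {i : AG} {l : Links} {a : Act} {t : (X → Val) → Val}
    (hsrc : source l = i) (h1 : es.psi1 i l a) (h3 : es.psi3 i l a t) :
    es.phi2spec l t := fun e he => by
  rw [es.rcv_val e l he]
  exact h3 _ (hsrc ▸ es.rcv_send_agent e l he) (es.kind_send_of_psi1 hsrc h1 he)

theorem msg_ne_bot_infinitely_often {i : AG} {l : Links} {a : Act} {phi : (X → Val) → Prop}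
    {t : (X → Val) → Val} (ht : ∀ s, t s ≠ bot) (h3 : es.psi3 i l a t)
    (h4 : ∀ e, es.agent e = i → ∃ e', es.agent e' = i ∧ es.locLe i e e' ∧
      (¬ phi (es.stateAfter e') ∨ es.kind e' = Sum.inr a))
    {e₀ : es.E} (he₀ : es.agent e₀ = i)
    (hstable : ∀ e, es.agent e = i → es.locLe i e₀ e → phi (es.stateAfter e)) :
    ∀ e, es.agent e = i → ∃ e', es.agent e' = i ∧ es.locLe i e e' ∧
      es.stateAfter e' (mv l) ≠ bot := by
  intro e he
  obtain ⟨m, hm, hem, he₀m⟩ := es.exists_locLe_of_agent_eq he he₀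
  obtain ⟨e', he', hme', hnphi | hka⟩ := h4 m hm
  · exact absurd (hstable e' he' (es.locLe_trans he₀m hme')) hnphi
  · exact ⟨e', he', es.locLe_trans hem hme', h3 e' he' hka ▸ ht _⟩

theorem phi3spec_of_psi {i : AG} {l : Links} {a : Act} {phi : (X → Val) → Prop}
    {t : (X → Val) → Val} (ht : ∀ s, t s ≠ bot) (h3 : es.psi3 i l a t)
    (h4 : es.psi4 i a phi) (hfs : es.FairSend i l) : es.phi3spec i l phi := by
  rcases h4 with ⟨hex, h4⟩ | hnone
  · by_cases hinf : ∀ e, es.agent e = i → ∃ e', es.agent e' = i ∧ es.locLe i e e' ∧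
        ¬ phi (es.stateAfter e')
    · exact Or.inl ⟨hex, hinf⟩
    · push Not at hinf
      obtain ⟨e₀, he₀, hstable⟩ := hinf
      exact Or.inr (Or.inr ⟨hex, hfs (es.msg_ne_bot_infinitely_often ht h3 h4 he₀ hstable)⟩)
  · exact Or.inr (Or.inl hnone)

theorem fairSpec_of_psi {i : AG} {l : Links} {a : Act} {phi : (X → Val) → Prop}
    {t : (X → Val) → Val} (hsrc : source l = i) (ht : ∀ s, t s ≠ bot)
    (h1 : es.psi1 i l a) (h2 : es.psi2 i a phi) (h3 : es.psi3 i l a t)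
    (h4 : es.psi4 i a phi) (hfs : es.FairSend i l) : es.FairSpec i l phi t :=
  ⟨es.phi1spec_of_psi hsrc h1 h2, es.phi2spec_of_psi hsrc h1 h3,
    es.phi3spec_of_psi ht h3 h4 hfs⟩

end EventStructure

theorem fair_pg_compose_satisfies_both_general
    {AG Links Act Val X : Type} {source dest : Links → AG} {bot : Val}
    {mv : Links → X}
    (es : EventStructure AG Links Act Val X source dest bot mv)
    (i i' : AG) (l l' : Links)
    (hsrc : source l = i) (hsrc' : source l' = i')
    (a a' : Act)
    (phi : (X → Val) → Prop) (phi' : (X → Val) → Prop)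
    (t : (X → Val) → Val) (t' : (X → Val) → Val)
    (ht : ∀ s, t s ≠ bot) (ht' : ∀ s, t' s ≠ bot)
    (h1 : es.psi1 i l a) (h2 : es.psi2 i a phi)
    (h3 : es.psi3 i l a t) (h4 : es.psi4 i a phi)
    (h1' : es.psi1 i' l' a') (h2' : es.psi2 i' a' phi')
    (h3' : es.psi3 i' l' a' t') (h4' : es.psi4 i' a' phi')
    (hfs : es.FairSend i l) (hfs' : es.FairSend i' l') :
    es.FairSpec i l phi t ∧ es.FairSpec i' l' phi' t' :=
  ⟨es.fairSpec_of_psi hsrc ht h1 h2 h3 h4 hfs, es.fairSpec_of_psi hsrc' ht' h1' h2' h3' h4' hfs'⟩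

/-- Composition of two fairness programs satisfies both fairness
specifications: for distinct links `l, l'` (with sources `i, i'`) and distinct
actions `a, a'`, if the clauses (ψ₁)–(ψ₄) of `Fair-Pg(φ,t,l,a)` and of
`Fair-Pg(φ',t',l',a')` all hold in an event structure satisfying the
event-structure axioms, and both `FairSend(l)` and `FairSend(l')` hold, then
both `Fair(φ,t,l)` and `Fair(φ',t',l')` hold. -/
theorem fair_pg_compose_satisfies_both
    {AG Links Act Val X : Type} {source dest : Links → AG} {bot : Val}
    {mv : Links → X}
    (es : EventStructure AG Links Act Val X source dest bot mv)
    (i i' : AG) (l l' : Links) (hll' : l ≠ l')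
    (hsrc : source l = i) (hsrc' : source l' = i')
    (a a' : Act) (haa' : a ≠ a')
    (phi : (X → Val) → Prop) (phi' : (X → Val) → Prop)
    (t : (X → Val) → Val) (t' : (X → Val) → Val)
    (ht : ∀ s, t s ≠ bot) (ht' : ∀ s, t' s ≠ bot)
    (h1 : es.psi1 i l a) (h2 : es.psi2 i a phi)
    (h3 : es.psi3 i l a t) (h4 : es.psi4 i a phi)
    (h1' : es.psi1 i' l' a') (h2' : es.psi2 i' a' phi')
    (h3' : es.psi3 i' l' a' t') (h4' : es.psi4 i' a' phi')
    (hfs : es.FairSend i l) (hfs' : es.FairSend i' l') :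
    es.FairSpec i l phi t ∧ es.FairSpec i' l' phi' t' :=
  fair_pg_compose_satisfies_both_general es i i' l l' hsrc hsrc' a a' phi phi' t t' ht ht' h1 h2 h3
    h4 h1' h2' h3' h4' hfs hfs'
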